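/- Let G be a finite solvable group. Then any two non-isolated vertices of Γ(G) are joined by a path in Γ(G); equivalently, the deleted co-maximal subgroup graph Γ*(G) is connected. -/

import Mathlib

open scoped Pointwise

/-! A nontrivial finite solvable group has a normal maximal subgroup `M`, namely any maximal
subgroup containing the commutator subgroup. Since `M` is normal, `L * M = L ⊔ M = G` for every
subgroup `L ⊄ M`. So a vertex outside `M` is adjacent to `M`, while every neighbour of a vertex
inside `M` lies outside `M`: all non-isolated vertices are within distance two of `M`. -/

/-- The co-maximal subgroup graph `Γ(G)`: vertices are the non-trivial proper
subgroups of `G`, and two distinct vertices `H`, `K` are adjacent iff `HK = G`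
as a setwise product. -/
def comaximalGraph (G : Type*) [Group G] :
    SimpleGraph {H : Subgroup G // H ≠ ⊥ ∧ H ≠ ⊤} where
  Adj H K := H ≠ K ∧ ((H.1 : Set G) * (K.1 : Set G) = Set.univ)
  symm := by
    constructor
    rintro H K ⟨hne, hmul⟩
    refine ⟨hne.symm, ?_⟩
    have h := congrArg (fun s : Set G => s⁻¹) hmul
    simpa [mul_inv_rev] using h
  loopless := by
    constructor
    rintro H ⟨hne, _⟩
    exact hne rfl

namespace Subgroup

variable {G : Type*} [Group G]

theorem exists_normal_isCoatom_of_isSolvable [Finite G] [Nontrivial G] [Group.IsSolvable G] :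
    ∃ M : Subgroup G, M.Normal ∧ IsCoatom M := by
  obtain ⟨M, hM, hcM⟩ := (eq_top_or_exists_le_coatom (_root_.commutator G)).resolve_left
    (Group.IsSolvable.commutator_lt_top_of_nontrivial G).ne
  exact ⟨M, .of_commutator_le G hcM, hM⟩

theorem coe_mul_coe_eq_univ_of_not_le {L M : Subgroup G} [M.Normal] (hM : IsCoatom M)
    (hL : ¬L ≤ M) : (L : Set G) * (M : Set G) = Set.univ := by
  rw [← mul_normal, codisjoint_iff.mp (hM.not_le_iff_codisjoint.mp hL).symm, coe_top]

theorem eq_top_of_coe_mul_coe_eq_univ {A L M : Subgroup G}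
    (h : (A : Set G) * (L : Set G) = Set.univ) (hA : A ≤ M) (hL : L ≤ M) : M = ⊤ := by
  refine (eq_top_iff' M).mpr fun x => ?_
  obtain ⟨a, ha, l, hl, rfl⟩ : x ∈ (A : Set G) * (L : Set G) := h ▸ Set.mem_univ x
  exact M.mul_mem (hA ha) (hL hl)

end Subgroup

namespace comaximalGraph

open Subgroup

variable {G : Type*} [Group G] {A L M : {H : Subgroup G // H ≠ ⊥ ∧ H ≠ ⊤}} [M.1.Normal]

theorem adj_of_not_le (hM : IsCoatom M.1) (hA : ¬A.1 ≤ M.1) : (comaximalGraph G).Adj A M :=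
  ⟨fun h => hA (h ▸ le_rfl), coe_mul_coe_eq_univ_of_not_le hM hA⟩

theorem reachable_of_adj (hM : IsCoatom M.1) (hAL : (comaximalGraph G).Adj A L) :
    (comaximalGraph G).Reachable A M := by
  by_cases hA : A.1 ≤ M.1
  · have hL : ¬L.1 ≤ M.1 := fun hL => hM.ne_top (eq_top_of_coe_mul_coe_eq_univ hAL.2 hA hL)
    exact hAL.reachable.trans (adj_of_not_le hM hL).reachable
  · exact (adj_of_not_le hM hA).reachable

end comaximalGraph

/-- If `G` is a finite solvable group, then any two non-isolated vertices of
`Γ(G)` are joined by a path, i.e. `Γ*(G)` is connected. -/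
theorem comaximal_reachable_of_solvable {G : Type*} [Group G] [Finite G]
    [Group.IsSolvable G]
    (H K : {H : Subgroup G // H ≠ ⊥ ∧ H ≠ ⊤})
    (hH : ∃ L, (comaximalGraph G).Adj H L)
    (hK : ∃ L, (comaximalGraph G).Adj K L) :
    (comaximalGraph G).Reachable H K := by
  have : Nontrivial H.1 := (Subgroup.nontrivial_iff_ne_bot H.1).mpr H.2.1
  have : Nontrivial G := (Subtype.val_injective (p := (· ∈ H.1))).nontrivial
  obtain ⟨M, hMn, hM⟩ := Subgroup.exists_normal_isCoatom_of_isSolvable (G := G)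
  have hMbot : M ≠ ⊥ := fun hbot =>
    H.2.2 (hM.lt_iff.mp (hbot ▸ bot_lt_iff_ne_bot.mpr H.2.1))
  let Mv : {H : Subgroup G // H ≠ ⊥ ∧ H ≠ ⊤} := ⟨M, hMbot, hM.ne_top⟩
  obtain ⟨L, hHL⟩ := hH
  obtain ⟨L', hKL'⟩ := hK
  exact (comaximalGraph.reachable_of_adj (M := Mv) hM hHL).trans
    (comaximalGraph.reachable_of_adj (M := Mv) hM hKL').symm
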